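/- (Abstract Korovkin theorem via P-statistical convergence.) Suppose P is a regular power series method and the Korovkin test hypotheses hold. Then for every ψ ∈ C(X), st_P-lim_{j→∞} ‖T_j(ψ) − ψ‖ = 0. -/

import Mathlib

/-!
Fix `x₁ ≠ x₂`. Then `u = Q_{x₁} + Q_{x₂}` is a strictly positive function in the span of the
`ψ_λ`, so `φ = f / u` is continuous. By compactness of `X × X`, for every `η > 0` there is `K` with
`|φ y - φ x| ≤ η + K Q_x(y)`, hence `|f - φ(x) u| ≤ η u + K ‖u‖ Q_x` pointwise. Applying a positive
`T` to this sandwich and evaluating at `x`, where `Q_x` vanishes, gives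
`‖T f - f‖ ≤ η' + C ∑_λ ‖T ψ_λ - ψ_λ‖` with `C` independent of `T`. Finally, sets of `P`-density
zero are closed under subsets and finite unions, so `P`-statistical limits are linear and pass
through such bounds.
-/

open Filter Topology
open scoped ENNReal

/-- A power series method `P`: a sequence `(s j)` of nonnegative reals with `s 0 > 0`
whose power series `s(t) = ∑ s j * t ^ j` has radius of convergence `R`, `0 < R ≤ ∞`. -/
structure PowerSeriesMethod where
  s : ℕ → ℝ
  s_nonneg : ∀ j, 0 ≤ s j
  s0_pos : 0 < s 0
  R : ℝ≥0∞
  R_pos : 0 < R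
  summable_of_lt : ∀ t : ℝ, 0 < t → ENNReal.ofReal t < R → Summable fun j => s j * t ^ j
  not_summable_of_gt : ∀ t : ℝ, R < ENNReal.ofReal t → ¬ Summable fun j => s j * t ^ j

namespace PowerSeriesMethod

/-- The filter of `t` tending to `R` from the left (through `0 < t < R`);
if `R = ∞` this is `atTop`. -/
noncomputable def limFilter (P : PowerSeriesMethod) : Filter ℝ :=
  if P.R = ⊤ then Filter.atTop else nhdsWithin P.R.toReal (Set.Ioo 0 P.R.toReal)

/-- `s(t) = ∑ s j t ^ j`. -/
noncomputable def sum (P : PowerSeriesMethod) (t : ℝ) : ℝ := ∑' j, P.s j * t ^ j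

/-- The quotient `(∑_{j ∈ E} s j t ^ j) / s(t)` whose limit as `t → R⁻` is the `P`-density. -/
noncomputable def densityFn (P : PowerSeriesMethod) (E : Set ℕ) (t : ℝ) : ℝ :=
  (∑' j, Set.indicator E (fun j => P.s j * t ^ j) j) / P.sum t

/-- `E ⊆ ℕ` has `P`-density `d`. -/
def HasDensity (P : PowerSeriesMethod) (E : Set ℕ) (d : ℝ) : Prop :=
  Tendsto (P.densityFn E) P.limFilter (𝓝 d)

/-- The power series method `P` is regular. -/
def Regular (P : PowerSeriesMethod) : Prop :=
  ∀ j, Tendsto (fun t => P.s j * t ^ j / P.sum t) P.limFilter (𝓝 0)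

/-- The sequence `x` is `P`-statistically convergent to `L`. -/
def StatTendsto (P : PowerSeriesMethod) (x : ℕ → ℝ) (L : ℝ) : Prop :=
  ∀ ε : ℝ, 0 < ε → P.HasDensity {j | ε ≤ |x j - L|} 0

end PowerSeriesMethod

namespace PowerSeriesMethod

variable (P : PowerSeriesMethod)

lemma eventually_pos_and_ofReal_lt_R : ∀ᶠ t in P.limFilter, 0 < t ∧ ENNReal.ofReal t < P.R := by
  rw [limFilter]
  split_ifs with h
  · filter_upwards [eventually_gt_atTop 0] with t ht
    exact ⟨ht, h ▸ ENNReal.ofReal_lt_top⟩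
  · filter_upwards [self_mem_nhdsWithin] with t ht
    exact ⟨ht.1, (ENNReal.ofReal_lt_iff_lt_toReal ht.1.le h).mpr ht.2⟩

section Density

variable {P} {t : ℝ} (ht : 0 < t) (htR : ENNReal.ofReal t < P.R)
include ht

lemma term_nonneg (j : ℕ) : 0 ≤ P.s j * t ^ j :=
  mul_nonneg (P.s_nonneg j) (pow_nonneg ht.le j)

lemma densityFn_nonneg (E : Set ℕ) : 0 ≤ P.densityFn E t :=
  div_nonneg (tsum_nonneg <| Set.indicator_nonneg fun j _ => term_nonneg ht j)
    (tsum_nonneg <| term_nonneg ht)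

include htR

lemma sum_pos : 0 < P.sum t :=
  (P.summable_of_lt t ht htR).tsum_pos (term_nonneg ht) 0 (by simpa using P.s0_pos)

lemma densityFn_mono {E F : Set ℕ} (hEF : E ⊆ F) : P.densityFn E t ≤ P.densityFn F t := by
  have hs := P.summable_of_lt t ht htR
  refine div_le_div_of_nonneg_right ?_ (sum_pos ht htR).le
  exact (hs.indicator E).tsum_le_tsum
    (Set.indicator_le_indicator_of_subset hEF fun j => term_nonneg ht j) (hs.indicator F)

lemma densityFn_union_le (E F : Set ℕ) :
    P.densityFn (E ∪ F) t ≤ P.densityFn E t + P.densityFn F t := by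
  have hs := P.summable_of_lt t ht htR
  rw [densityFn, densityFn, densityFn, ← add_div, ← (hs.indicator E).tsum_add (hs.indicator F)]
  refine div_le_div_of_nonneg_right ?_ (sum_pos ht htR).le
  refine (hs.indicator _).tsum_le_tsum (fun j => ?_) ((hs.indicator E).add (hs.indicator F))
  rw [← Set.indicator_union_add_inter_apply]
  exact le_add_of_nonneg_right (Set.indicator_nonneg (fun j _ => term_nonneg ht j) j)

end Density

lemma hasDensity_empty : P.HasDensity ∅ 0 := by
  have : P.densityFn ∅ = fun _ => 0 := funext fun t => by simp [densityFn]
  rw [HasDensity, this]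
  exact tendsto_const_nhds

variable {P}

lemma HasDensity.zero_of_subset {E F : Set ℕ} (hF : P.HasDensity F 0) (hEF : E ⊆ F) :
    P.HasDensity E 0 :=
  squeeze_zero' (P.eventually_pos_and_ofReal_lt_R.mono fun _ ht => densityFn_nonneg ht.1 E)
    (P.eventually_pos_and_ofReal_lt_R.mono fun _ ht => densityFn_mono ht.1 ht.2 hEF) hF

lemma HasDensity.zero_union {E F : Set ℕ} (hE : P.HasDensity E 0) (hF : P.HasDensity F 0) :
    P.HasDensity (E ∪ F) 0 :=
  squeeze_zero' (P.eventually_pos_and_ofReal_lt_R.mono fun _ ht => densityFn_nonneg ht.1 _)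
    (P.eventually_pos_and_ofReal_lt_R.mono fun _ ht => densityFn_union_le ht.1 ht.2 E F)
    (by simpa using hE.add hF)

lemma statTendsto_const (a : ℝ) : P.StatTendsto (fun _ => a) a := fun ε hε => by
  simpa [not_le.mpr hε] using P.hasDensity_empty

lemma StatTendsto.add {x y : ℕ → ℝ} {a b : ℝ} (hx : P.StatTendsto x a) (hy : P.StatTendsto y b) :
    P.StatTendsto (fun j => x j + y j) (a + b) := fun ε hε => by
  refine ((hx _ (half_pos hε)).zero_union (hy _ (half_pos hε))).zero_of_subset fun j hj => ?_
  by_contra! h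
  simp only [Set.mem_union, Set.mem_ofPred_eq, not_or, not_le] at h hj
  have := abs_add_le (x j - a) (y j - b)
  rw [add_sub_add_comm] at hj
  linarith

lemma StatTendsto.const_mul {x : ℕ → ℝ} {a : ℝ} (hx : P.StatTendsto x a) (c : ℝ) :
    P.StatTendsto (fun j => c * x j) (c * a) := fun ε hε => by
  have hc : 0 < |c| + 1 := by positivity
  refine (hx _ (div_pos hε hc)).zero_of_subset fun j hj => ?_
  by_contra! h
  simp only [Set.mem_ofPred_eq, not_le, ← mul_sub, abs_mul] at h hj
  rw [lt_div_iff₀ hc] at h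
  nlinarith [abs_nonneg c, abs_nonneg (x j - a)]

lemma StatTendsto.finset_sum {ι : Type*} (s : Finset ι) {x : ι → ℕ → ℝ} {a : ι → ℝ}
    (hx : ∀ i ∈ s, P.StatTendsto (x i) (a i)) :
    P.StatTendsto (fun j => ∑ i ∈ s, x i j) (∑ i ∈ s, a i) := by
  classical
  induction s using Finset.induction with
  | empty => simpa using statTendsto_const 0
  | insert i s hi ih =>
    simp only [Finset.sum_insert hi]
    exact (hx i (s.mem_insert_self i)).add (ih fun k hk => hx k (Finset.mem_insert_of_mem hk))

lemma statTendsto_zero_of_forall_abs_le_add {x : ℕ → ℝ}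
    (h : ∀ η > 0, ∃ y : ℕ → ℝ, P.StatTendsto y 0 ∧ ∀ j, |x j| ≤ η + y j) :
    P.StatTendsto x 0 := fun ε hε => by
  obtain ⟨y, hy, hxy⟩ := h (ε / 2) (half_pos hε)
  refine (hy _ (half_pos hε)).zero_of_subset fun j hj => ?_
  simp only [Set.mem_ofPred_eq, sub_zero] at hj ⊢
  linarith [hxy j, le_abs_self (y j)]

end PowerSeriesMethod

section Korovkin

variable {X : Type*} [TopologicalSpace X]

lemma abs_apply_le_apply_of_abs_le (T : C(X, ℝ) →ₗ[ℝ] C(X, ℝ)) (hT : ∀ f, 0 ≤ f → 0 ≤ T f)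
    {f h : C(X, ℝ)} (hfh : ∀ y, |f y| ≤ h y) (x : X) : |T f x| ≤ T h x := by
  have hsub := hT (h - f) fun y => by simpa using (abs_le.mp (hfh y)).2
  have hadd := hT (h + f) fun y => by simpa [neg_le_iff_add_nonneg'] using (abs_le.mp (hfh y)).1
  rw [map_sub] at hsub
  rw [map_add] at hadd
  have h₁ : 0 ≤ T h x - T f x := hsub x
  have h₂ : 0 ≤ T h x + T f x := hadd x
  exact abs_le.mpr ⟨by linarith, by linarith⟩

lemma exists_abs_le_add_mul_of_eq_zero {Z : Type*} [TopologicalSpace Z] [CompactSpace Z]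
    {h q : Z → ℝ} (hh : Continuous h) (hq : Continuous q) (hq₀ : ∀ z, 0 ≤ q z)
    (hhq : ∀ z, q z = 0 → h z = 0) {η : ℝ} (hη : 0 < η) :
    ∃ K, 0 ≤ K ∧ ∀ z, |h z| ≤ η + K * q z := by
  -- on the compact set where `|h| ≥ η`, `q` is bounded away from `0`
  obtain ⟨m, hm, hqm⟩ := (isClosed_le continuous_const hh.abs).isCompact.exists_forall_le'
    hq.continuousOn (a := 0) fun z hz => (hq₀ z).lt_of_ne fun h0 => by
      simp only [Set.mem_ofPred_eq, hhq z h0.symm, abs_zero] at hz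
      linarith
  obtain ⟨M, hM⟩ := isCompact_univ.exists_bound_of_continuousOn hh.continuousOn
  refine ⟨|M| / m, by positivity, fun z => ?_⟩
  by_cases hz : η ≤ |h z|
  · have hMz : |h z| ≤ |M| := (hM z (Set.mem_univ z)).trans (le_abs_self M)
    have : |M| ≤ |M| / m * q z := by
      rw [div_mul_eq_mul_div, le_div_iff₀ hm]
      exact mul_le_mul_of_nonneg_left (hqm z hz) (abs_nonneg M)
    linarith
  · have : 0 ≤ |M| / m * q z := by have := hq₀ z; positivity
    linarith

variable [CompactSpace X]

lemma abs_map_sub_apply_le (T : C(X, ℝ) →ₗ[ℝ] C(X, ℝ)) (hT : ∀ f, 0 ≤ f → 0 ≤ T f)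
    {f u w : C(X, ℝ)} {r a b : ℝ} {x : X} (ha : 0 ≤ a) (hb : 0 ≤ b)
    (hf : ∀ y, |f y - r * u y| ≤ a * u y + b * w y) (hfx : f x = r * u x) (hwx : w x = 0) :
    |T f x - f x| ≤ a * ‖u‖ + (a + |r|) * ‖T u - u‖ + b * ‖T w - w‖ := by
  have hmain : |T f x - r * T u x| ≤ a * T u x + b * T w x := by
    simpa using abs_apply_le_apply_of_abs_le T hT (f := f - r • u) (h := a • u + b • w)
      (by simpa using hf) x
  have hu : |T u x - u x| ≤ ‖T u - u‖ := by simpa using (T u - u).norm_coe_le_norm x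
  have hw : T w x ≤ ‖T w - w‖ := by
    simpa [hwx] using (le_abs_self _).trans ((T w - w).norm_coe_le_norm x)
  have hux : u x ≤ ‖u‖ := (le_abs_self _).trans (by simpa using u.norm_coe_le_norm x)
  have hr : |r * (T u x - u x)| ≤ |r| * ‖T u - u‖ := by
    rw [abs_mul]; exact mul_le_mul_of_nonneg_left hu (abs_nonneg r)
  have hTu : T u x ≤ ‖u‖ + ‖T u - u‖ := by linarith [(abs_le.mp hu).2]
  have h₁ : a * T u x ≤ a * (‖u‖ + ‖T u - u‖) := mul_le_mul_of_nonneg_left hTu ha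
  have h₂ : b * T w x ≤ b * ‖T w - w‖ := mul_le_mul_of_nonneg_left hw hb
  rw [abs_le] at hmain hr ⊢
  constructor <;> linarith [hmain.1, hmain.2, hr.1, hr.2]

lemma norm_map_sum_smul_sub_le {ι : Type*} [Fintype ι] (T : C(X, ℝ) →ₗ[ℝ] C(X, ℝ))
    (ψ : ι → C(X, ℝ)) {c : ι → ℝ} {B : ℝ} (hc : ∀ i, |c i| ≤ B) :
    ‖T (∑ i, c i • ψ i) - ∑ i, c i • ψ i‖ ≤ B * ∑ i, ‖T (ψ i) - ψ i‖ := by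
  simp only [map_sum, map_smul, ← Finset.sum_sub_distrib, ← smul_sub, Finset.mul_sum]
  refine (norm_sum_le _ _).trans (Finset.sum_le_sum fun i _ => ?_)
  rw [norm_smul, Real.norm_eq_abs]
  exact mul_le_mul_of_nonneg_right (hc i) (norm_nonneg _)

end Korovkin

section KorovkinFunction

variable {X : Type*} [TopologicalSpace X] {ι : Type*} [Fintype ι] (g ψ : ι → C(X, ℝ))

/-- The paper's `Q_x`. -/
def korovkinFunction (x : X) : C(X, ℝ) := ∑ i, g i x • ψ i

lemma korovkinFunction_apply (x y : X) : korovkinFunction g ψ x y = ∑ i, g i x * ψ i y := by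
  simp [korovkinFunction]

lemma continuous_korovkinFunction_uncurry :
    Continuous fun p : X × X => korovkinFunction g ψ p.1 p.2 := by
  simp only [korovkinFunction_apply]
  fun_prop

variable {g ψ}

lemma korovkinFunction_add_pos (hQpos : ∀ x y : X, 0 ≤ ∑ i, g i x * ψ i y)
    (hQzero : ∀ x y : X, (∑ i, g i x * ψ i y) = 0 ↔ y = x) {x₁ x₂ : X} (h : x₁ ≠ x₂) (y : X) :
    0 < korovkinFunction g ψ x₁ y + korovkinFunction g ψ x₂ y := by
  simp only [korovkinFunction_apply]
  by_contra! hle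
  have h₁ := hQpos x₁ y
  have h₂ := hQpos x₂ y
  exact h (((hQzero x₁ y).1 (by linarith)).symm.trans ((hQzero x₂ y).1 (by linarith)))

variable [CompactSpace X]

lemma norm_map_korovkinFunction_sub_le (T : C(X, ℝ) →ₗ[ℝ] C(X, ℝ)) (x : X) :
    ‖T (korovkinFunction g ψ x) - korovkinFunction g ψ x‖ ≤
      (∑ i, ‖g i‖) * ∑ i, ‖T (ψ i) - ψ i‖ :=
  norm_map_sum_smul_sub_le T ψ fun i => calc
    |g i x| ≤ ‖g i‖ := by simpa using (g i).norm_coe_le_norm x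
    _ ≤ ∑ i, ‖g i‖ := Finset.single_le_sum (fun i _ => norm_nonneg (g i)) (Finset.mem_univ i)

theorem korovkin_estimate [Nontrivial X] (hQpos : ∀ x y : X, 0 ≤ ∑ i, g i x * ψ i y)
    (hQzero : ∀ x y : X, (∑ i, g i x * ψ i y) = 0 ↔ y = x) (f : C(X, ℝ)) {η : ℝ} (hη : 0 < η) :
    ∃ C, ∀ T : C(X, ℝ) →ₗ[ℝ] C(X, ℝ), (∀ f, 0 ≤ f → 0 ≤ T f) →
      ‖T f - f‖ ≤ η + C * ∑ i, ‖T (ψ i) - ψ i‖ := by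
  obtain ⟨x₁, x₂, h₁₂⟩ := exists_pair_ne X
  set Q := korovkinFunction g ψ
  set u := Q x₁ + Q x₂
  have hu : ∀ y, 0 < u y := korovkinFunction_add_pos hQpos hQzero h₁₂
  let φ : C(X, ℝ) := ⟨fun y => f y / u y, f.continuous.div u.continuous fun y => (hu y).ne'⟩
  set η₀ := η / (‖u‖ + 1)
  have hη₀ : η₀ * ‖u‖ ≤ η := by
    rw [div_mul_eq_mul_div, div_le_iff₀ (by positivity)]
    nlinarith [norm_nonneg u]
  obtain ⟨K, hK, hφ⟩ := exists_abs_le_add_mul_of_eq_zero (h := fun p : X × X => φ p.2 - φ p.1)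
    (by fun_prop) (continuous_korovkinFunction_uncurry g ψ)
    (fun p => by simpa [Q, korovkinFunction_apply] using hQpos p.1 p.2)
    (fun p hp => by rw [(hQzero p.1 p.2).1 (by simpa [Q, korovkinFunction_apply] using hp), sub_self])
    (by positivity : 0 < η₀)
  have hf : ∀ x y, |f y - φ x * u y| ≤ η₀ * u y + K * ‖u‖ * Q x y := by
    intro x y
    have huy : u y ≤ ‖u‖ := (le_abs_self _).trans (by simpa using u.norm_coe_le_norm y)
    have hQ : 0 ≤ Q x y := by simpa [Q, korovkinFunction_apply] using hQpos x y
    calc |f y - φ x * u y| = |φ y - φ x| * u y := by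
          rw [← abs_of_pos (hu y), ← abs_mul, abs_of_pos (hu y)]
          simp [φ, sub_mul, div_mul_cancel₀ _ (hu y).ne']
      _ ≤ (η₀ + K * Q x y) * u y := mul_le_mul_of_nonneg_right (hφ (x, y)) (hu y).le
      _ ≤ η₀ * u y + K * ‖u‖ * Q x y := by nlinarith [mul_nonneg hK hQ]
  set G := ∑ i, ‖g i‖
  refine ⟨2 * G * (η₀ + ‖φ‖) + K * ‖u‖ * G, fun T hT => ?_⟩
  set E := ∑ i, ‖T (ψ i) - ψ i‖
  have hG : 0 ≤ G := Finset.sum_nonneg fun i _ => norm_nonneg _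
  have hE : 0 ≤ E := Finset.sum_nonneg fun i _ => norm_nonneg _
  have hTu : ‖T u - u‖ ≤ 2 * G * E := calc
    ‖T u - u‖ = ‖(T (Q x₁) - Q x₁) + (T (Q x₂) - Q x₂)‖ := by simp only [u, map_add]; congr 1; abel
    _ ≤ G * E + G * E := (norm_add_le _ _).trans (add_le_add
        (norm_map_korovkinFunction_sub_le T x₁) (norm_map_korovkinFunction_sub_le T x₂))
    _ = 2 * G * E := by ring
  refine (ContinuousMap.norm_le _ (by positivity)).2 fun x => ?_
  have hφx : |φ x| ≤ ‖φ‖ := by simpa using φ.norm_coe_le_norm x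
  calc ‖(T f - f) x‖ = |T f x - f x| := Real.norm_eq_abs _
    _ ≤ η₀ * ‖u‖ + (η₀ + |φ x|) * ‖T u - u‖ + K * ‖u‖ * ‖T (Q x) - Q x‖ :=
        abs_map_sub_apply_le T hT (by positivity) (by positivity) (hf x)
          (by simp [φ, div_mul_cancel₀ _ (hu x).ne'])
          (by simp [Q, korovkinFunction_apply, hQzero])
    _ ≤ η + (η₀ + ‖φ‖) * (2 * G * E) + K * ‖u‖ * (G * E) := by
        gcongr
        exact norm_map_korovkinFunction_sub_le T x
    _ = η + (2 * G * (η₀ + ‖φ‖) + K * ‖u‖ * G) * E := by ring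

end KorovkinFunction

theorem abstract_korovkin_pstat_general (P : PowerSeriesMethod)
    {X : Type*} [TopologicalSpace X] [CompactSpace X] [Nontrivial X]
    (d : ℕ) (ψ g : Fin d → C(X, ℝ))
    (hQpos : ∀ x y : X, 0 ≤ ∑ l, g l x * ψ l y)
    (hQzero : ∀ x y : X, (∑ l, g l x * ψ l y) = 0 ↔ y = x)
    (T : ℕ → C(X, ℝ) →ₗ[ℝ] C(X, ℝ))
    (hTpos : ∀ j (f : C(X, ℝ)), 0 ≤ f → 0 ≤ T j f)
    (hTconv : ∀ l, P.StatTendsto (fun j => ‖T j (ψ l) - ψ l‖) 0) :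
    ∀ f : C(X, ℝ), P.StatTendsto (fun j => ‖T j f - f‖) 0 := by
  intro f
  refine PowerSeriesMethod.statTendsto_zero_of_forall_abs_le_add fun η hη => ?_
  obtain ⟨C, hC⟩ := korovkin_estimate hQpos hQzero f hη
  refine ⟨fun j => C * ∑ l, ‖T j (ψ l) - ψ l‖, ?_, fun j => ?_⟩
  · simpa using (PowerSeriesMethod.StatTendsto.finset_sum _ fun l _ => hTconv l).const_mul C
  · rw [abs_norm]
    exact hC (T j) (hTpos j)

/-- abstract Korovkin theorem via `P`-statistical convergence:
under the Korovkin test hypotheses, `st_P-lim ‖T_j ψ − ψ‖ = 0` for every `ψ ∈ C(X)`. -/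
theorem abstract_korovkin_pstat (P : PowerSeriesMethod) (hP : P.Regular)
    {X : Type*} [TopologicalSpace X] [CompactSpace X] [T2Space X] [Nontrivial X]
    (d : ℕ) (ψ g : Fin d → C(X, ℝ))
    (hQpos : ∀ x y : X, 0 ≤ ∑ l, g l x * ψ l y)
    (hQzero : ∀ x y : X, (∑ l, g l x * ψ l y) = 0 ↔ y = x)
    (T : ℕ → C(X, ℝ) →ₗ[ℝ] C(X, ℝ))
    (hTpos : ∀ j (f : C(X, ℝ)), 0 ≤ f → 0 ≤ T j f)
    (hTconv : ∀ l, P.StatTendsto (fun j => ‖T j (ψ l) - ψ l‖) 0) :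
    ∀ f : C(X, ℝ), P.StatTendsto (fun j => ‖T j f - f‖) 0 :=
  abstract_korovkin_pstat_general P d ψ g hQpos hQzero T hTpos hTconv
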